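/- arXiv:2604.08721 — 2 statements merged into one kernel-verified Lean document; each statement's English description precedes it below -/
import Mathlib

section
/- Let k ≥ 3 be an odd integer and set p := k − 2 (odd). Let {v_1,…,v_n} be an orthonormal basis of ℝ^n and κ_r < 0, λ_r ∈ ℝ for r = 1,…,n. For each r with λ_r ≠ 0 let c_r be the unique real root of κ_r + λ_r s^p = 0 (so c_r > 0 when λ_r > 0 and c_r < 0 when λ_r < 0), and define ℛ_odd := { x₀ ∈ ℝ^n : ⟨v_r, x₀⟩ < c_r for all r with λ_r > 0, and ⟨v_r, x₀⟩ > c_r for all r with λ_r < 0 }. Then for every differentiable solution x : [0,∞) → ℝ^n of ẋ(t) = Σ_{r=1}^n (κ_r·⟨v_r, x(t)⟩ + λ_r·⟨v_r, x(t)⟩^{k-1})·v_r with x(0) ∈ ℛ_odd, one has x(t) ∈ ℛ_odd for all t ≥ 0 and x(t) → 0 as t → ∞. -/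
/-!
Projecting onto the basis vectors decouples the system into scalar equations
`y' = y * g y` with `g s = κ + λ * s ^ p`. Since `p` is odd, the coordinate conditions defining
`ℛ_odd` say exactly `g y < 0`, and `{g < 0}` is an open interval containing `0`. Choose
`[a, b] ⊆ {g < 0}` with `a < 0 < b` containing `y 0`, and `μ < 0` with `g ≤ μ` on `[a, b]`. The
envelopes `a * exp (μ t / 2)` and `b * exp (μ t / 2)` are strict barriers for the scalar equation:
where `y` touches one, `y * g y` is beyond `μ / 2` times `y`. So `y` stays between them, hence in
`[a, b]`, and tends to `0`.
-/

open Set Filter Topology Real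

theorem le_of_hasDerivAt_lt_of_eq {f f' B B' : ℝ → ℝ}
    (hf : ∀ t, 0 ≤ t → HasDerivAt f (f' t) t) (hB : ∀ t, 0 ≤ t → HasDerivAt B (B' t) t)
    (h0 : f 0 ≤ B 0) (hlt : ∀ t, 0 ≤ t → f t = B t → f' t < B' t) :
    ∀ t, 0 ≤ t → f t ≤ B t := fun _ ht =>
  image_le_of_deriv_right_lt_deriv_boundary'
    (fun s hs => (hf s hs.1).continuousAt.continuousWithinAt)
    (fun s hs => (hf s hs.1).hasDerivWithinAt) h0
    (fun s hs => (hB s hs.1).continuousAt.continuousWithinAt)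
    (fun s hs => (hB s hs.1).hasDerivWithinAt) (fun s hs => hlt s hs.1) ⟨ht, le_rfl⟩

theorem mem_Icc_mul_exp_of_hasDerivAt_mul {g y : ℝ → ℝ} {a b μ : ℝ} (ha : a < 0) (hb : 0 < b)
    (hμ : μ < 0) (hg : ∀ s ∈ Icc a b, g s ≤ μ)
    (hy : ∀ t, 0 ≤ t → HasDerivAt y (y t * g (y t)) t) (hy0 : y 0 ∈ Icc a b) :
    ∀ t, 0 ≤ t → y t ∈ Icc (a * exp (μ / 2 * t)) (b * exp (μ / 2 * t)) := by
  have hexp : ∀ t, 0 ≤ t → 0 < exp (μ / 2 * t) ∧ exp (μ / 2 * t) ≤ 1 := fun t ht =>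
    ⟨exp_pos _, exp_le_one_iff.2 (by nlinarith)⟩
  have henv : ∀ e t, HasDerivAt (fun t => e * exp (μ / 2 * t)) (e * exp (μ / 2 * t) * (μ / 2)) t :=
    fun e t => by simpa [mul_assoc] using ((hasDerivAt_id t).const_mul (μ / 2)).exp.const_mul e
  intro t ht
  constructor
  · refine le_of_hasDerivAt_lt_of_eq (fun t _ => henv a t) hy (by simpa using hy0.1)
      (fun s hs hys => ?_) t ht
    obtain ⟨hpos, hle⟩ := hexp s hs
    have hw : a * exp (μ / 2 * s) ∈ Icc a b := ⟨by nlinarith, by nlinarith⟩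
    rw [← hys]
    nlinarith [hg _ hw, mul_neg_of_neg_of_pos ha hpos]
  · refine le_of_hasDerivAt_lt_of_eq hy (fun t _ => henv b t) (by simpa using hy0.2)
      (fun s hs hys => ?_) t ht
    obtain ⟨hpos, hle⟩ := hexp s hs
    have hw : b * exp (μ / 2 * s) ∈ Icc a b := ⟨by nlinarith, by nlinarith⟩
    rw [hys]
    nlinarith [hg _ hw, mul_pos hb hpos]

theorem exists_Icc_subset_of_isOpen {S : Set ℝ} (hS : IsOpen S) (hSc : S.OrdConnected)
    {x y : ℝ} (hx : x ∈ S) (hy : y ∈ S) : ∃ a b, a < x ∧ x < b ∧ y ∈ Icc a b ∧ Icc a b ⊆ S := by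
  obtain ⟨ε, hε, hball⟩ := Metric.isOpen_iff.1 hS x hx
  have hl : x - ε / 2 ∈ S := hball (by rw [Real.ball_eq_Ioo]; constructor <;> linarith)
  have hr : x + ε / 2 ∈ S := hball (by rw [Real.ball_eq_Ioo]; constructor <;> linarith)
  refine ⟨min (x - ε / 2) y, max (x + ε / 2) y, min_lt_of_left_lt (by linarith),
    lt_max_of_lt_left (by linarith), ⟨min_le_right _ _, le_max_right _ _⟩, hSc.out ?_ ?_⟩
  · rcases min_choice (x - ε / 2) y with h | h <;> rw [h] <;> assumption
  · rcases max_choice (x + ε / 2) y with h | h <;> rw [h] <;> assumption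

theorem mem_and_tendsto_zero_of_hasDerivAt_mul {g y : ℝ → ℝ} {S : Set ℝ} (hS : IsOpen S)
    (hSc : S.OrdConnected) (hS0 : (0 : ℝ) ∈ S) (hg : Continuous g) (hgS : ∀ s ∈ S, g s < 0)
    (hy : ∀ t, 0 ≤ t → HasDerivAt y (y t * g (y t)) t) (hy0 : y 0 ∈ S) :
    (∀ t, 0 ≤ t → y t ∈ S) ∧ Tendsto y atTop (𝓝 0) := by
  obtain ⟨a, b, ha, hb, hy0ab, habS⟩ := exists_Icc_subset_of_isOpen hS hSc hS0 hy0
  obtain ⟨s₀, hs₀, hmax⟩ := isCompact_Icc.exists_isMaxOn (nonempty_of_mem hy0ab) hg.continuousOn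
  have hμ : g s₀ < 0 := hgS s₀ (habS hs₀)
  have henv := mem_Icc_mul_exp_of_hasDerivAt_mul ha hb hμ (fun s hs => hmax hs) hy hy0ab
  have hdecay : Tendsto (fun t => exp (g s₀ / 2 * t)) atTop (𝓝 0) :=
    tendsto_exp_atBot.comp (tendsto_id.const_mul_atTop_of_neg (by linarith))
  have hle : ∀ t, 0 ≤ t → exp (g s₀ / 2 * t) ≤ 1 := fun t ht => exp_le_one_iff.2 (by nlinarith)
  refine ⟨fun t ht => habS ⟨?_, ?_⟩, ?_⟩
  · nlinarith [(henv t ht).1, hle t ht]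
  · nlinarith [(henv t ht).2, hle t ht]
  · refine tendsto_of_tendsto_of_tendsto_of_le_of_le' (by simpa using hdecay.const_mul a)
      (by simpa using hdecay.const_mul b) ?_ ?_ <;>
    filter_upwards [eventually_ge_atTop 0] with t ht
    exacts [(henv t ht).1, (henv t ht).2]

theorem add_mul_pow_neg_iff {p : ℕ} (hp : Odd p) {κ lam c : ℝ} (hκ : κ < 0)
    (hc : lam ≠ 0 → κ + lam * c ^ p = 0) (s : ℝ) :
    κ + lam * s ^ p < 0 ↔ (0 < lam → s < c) ∧ (lam < 0 → c < s) := by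
  rcases lt_trichotomy lam 0 with hlam | rfl | hlam
  · have hκc : κ = -(lam * c ^ p) := by linarith [hc hlam.ne]
    calc κ + lam * s ^ p < 0 ↔ lam * s ^ p < lam * c ^ p := by
          rw [hκc]; constructor <;> intro <;> linarith
      _ ↔ c < s := by rw [mul_lt_mul_left_of_neg hlam, hp.strictMono_pow.lt_iff_lt]
      _ ↔ _ := by simp [hlam, hlam.not_gt]
  · simp [hκ]
  · have hκc : κ = -(lam * c ^ p) := by linarith [hc hlam.ne']
    calc κ + lam * s ^ p < 0 ↔ lam * s ^ p < lam * c ^ p := by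
          rw [hκc]; constructor <;> intro <;> linarith
      _ ↔ s < c := by rw [mul_lt_mul_iff_right₀ hlam, hp.strictMono_pow.lt_iff_lt]
      _ ↔ _ := by simp [hlam, hlam.not_gt]

theorem ordConnected_setOf_add_mul_pow_neg {p : ℕ} (hp : Odd p) (κ lam : ℝ) :
    {s : ℝ | κ + lam * s ^ p < 0}.OrdConnected := by
  rcases le_total 0 lam with hlam | hlam
  · exact ordConnected_Iio.preimage_mono ((hp.strictMono_pow.monotone.const_mul hlam).const_add κ)
  · exact ordConnected_Iio.preimage_anti
      ((hp.strictMono_pow.monotone.const_mul_of_nonpos hlam).const_add κ)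

theorem OrthonormalBasis.hasDerivAt_inner {ι E : Type*} [Fintype ι] [NormedAddCommGroup E]
    [InnerProductSpace ℝ E] (v : OrthonormalBasis ι ℝ E) {x : ℝ → E} {l : ι → ℝ} {t : ℝ}
    (hx : HasDerivAt x (∑ i, l i • v i) t) (i : ι) :
    HasDerivAt (fun t => inner ℝ (v i) (x t)) (l i) t := by
  simpa [v.orthonormal.inner_right_fintype] using (hasDerivAt_const t (v i)).inner ℝ hx

theorem stmt_9_general (k n : ℕ) (hk : 3 ≤ k) (hko : Odd k)
    (v : OrthonormalBasis (Fin n) ℝ (EuclideanSpace ℝ (Fin n)))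
    (κ lam : Fin n → ℝ) (hκ : ∀ r, κ r < 0)
    (p : ℕ) (hp : p = k - 2)
    (c : Fin n → ℝ)
    (hc : ∀ r, lam r ≠ 0 → κ r + lam r * c r ^ p = 0)
    (R : Set (EuclideanSpace ℝ (Fin n)))
    (hR : R = {x₀ | (∀ r, 0 < lam r → (inner ℝ (v r) x₀ : ℝ) < c r)
      ∧ (∀ r, lam r < 0 → c r < (inner ℝ (v r) x₀ : ℝ))})
    (x : ℝ → EuclideanSpace ℝ (Fin n))
    (hx : ∀ t : ℝ, 0 ≤ t →
      HasDerivAt x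
        (∑ r, (κ r * (inner ℝ (v r) (x t) : ℝ)
          + lam r * (inner ℝ (v r) (x t) : ℝ) ^ (k - 1)) • v r) t)
    (hx0 : x 0 ∈ R) :
    (∀ t : ℝ, 0 ≤ t → x t ∈ R)
    ∧ Filter.Tendsto x Filter.atTop (nhds 0) := by
  have hpodd : Odd p := hp ▸ Nat.Odd.sub_even (by omega) hko even_two
  set y : Fin n → ℝ → ℝ := fun r t => inner ℝ (v r) (x t)
  have hy : ∀ r t, 0 ≤ t → HasDerivAt (y r) (y r t * (κ r + lam r * y r t ^ p)) t := by
    intro r t ht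
    convert v.hasDerivAt_inner (hx t ht) r using 1
    rw [show k - 1 = p + 1 by omega]
    ring
  have hmemR : ∀ z, z ∈ R ↔ ∀ r, κ r + lam r * inner ℝ (v r) z ^ p < 0 := by
    simp [hR, add_mul_pow_neg_iff hpodd (hκ _) (hc _), forall_and]
  have hcoord : ∀ r, (∀ t, 0 ≤ t → κ r + lam r * y r t ^ p < 0) ∧ Tendsto (y r) atTop (𝓝 0) :=
    fun r => mem_and_tendsto_zero_of_hasDerivAt_mul
      (isOpen_lt (by fun_prop) continuous_const) (ordConnected_setOf_add_mul_pow_neg hpodd _ _)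
      (by simp [hpodd.pos.ne', hκ r]) (by fun_prop) (fun _ hs => hs) (hy r) ((hmemR _).1 hx0 r)
  refine ⟨fun t ht => (hmemR _).2 fun r => (hcoord r).1 t ht, ?_⟩
  rw [show x = fun t => ∑ r, y r t • v r from funext fun t => (v.sum_repr' (x t)).symm]
  simpa using tendsto_finsetSum Finset.univ fun r _ => (hcoord r).2.smul_const (v r)

/-- Odd-degree region of attraction ℛ_odd is forward invariant and
attracts to the origin. -/
theorem stmt_9 (k n : ℕ) (hk : 3 ≤ k) (hko : Odd k)
    (v : OrthonormalBasis (Fin n) ℝ (EuclideanSpace ℝ (Fin n)))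
    (κ lam : Fin n → ℝ) (hκ : ∀ r, κ r < 0)
    (p : ℕ) (hp : p = k - 2)
    (c : Fin n → ℝ)
    (hc : ∀ r, lam r ≠ 0 → κ r + lam r * c r ^ p = 0)
    (hcsign : ∀ r, (0 < lam r → 0 < c r) ∧ (lam r < 0 → c r < 0))
    (R : Set (EuclideanSpace ℝ (Fin n)))
    (hR : R = {x₀ | (∀ r, 0 < lam r → (inner ℝ (v r) x₀ : ℝ) < c r)
      ∧ (∀ r, lam r < 0 → c r < (inner ℝ (v r) x₀ : ℝ))})
    (x : ℝ → EuclideanSpace ℝ (Fin n))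
    (hx : ∀ t : ℝ, 0 ≤ t →
      HasDerivAt x
        (∑ r, (κ r * (inner ℝ (v r) (x t) : ℝ)
          + lam r * (inner ℝ (v r) (x t) : ℝ) ^ (k - 1)) • v r) t)
    (hx0 : x 0 ∈ R) :
    (∀ t : ℝ, 0 ≤ t → x t ∈ R)
    ∧ Filter.Tendsto x Filter.atTop (nhds 0) :=
  stmt_9_general k n hk hko v κ lam hκ p hp c hc R hR x hx hx0
end

section
/- Let p ≥ 1 be an odd integer, κ < 0, α := −κ > 0, and λ > 0, and set c := (α/λ)^{1/p} > 0. Let y₀ > c, and define the escape time T_esc := (1/(p·α))·ln( (λ/α) / (λ/α − y₀^{−p}) ), which is well-defined and positive since 0 < y₀^{−p} < λ/α. Then there is no differentiable function y : [0, T_esc] → ℝ satisfying ẏ(t) = κ·y(t) + λ·y(t)^{p+1} for all t ∈ [0, T_esc] with y(0) = y₀; i.e., the solution escapes to +∞ in finite time, before T_esc. -/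
/-!
Writing `α = -κ` and `u = y⁻ᵖ`, the mode becomes the linear equation `u' = pα u - pλ`, whose
solution `u(t) = λ/α - (λ/α - u₀) e^{pαt}` vanishes exactly at the escape time `T`. To avoid
dividing by `y`, we use the quantity `W = yᵖ (λ - C e^{pαt}) + κ` with `C = λ - α u₀`:
it solves the linear equation `W' = pλ yᵖ W` and `W(0) = 0`, hence `W ≡ 0` by Grönwall. But at
`t = T` the bracket vanishes, so `W(T) = κ ≠ 0`.
-/

open Set Real

theorem eq_zero_of_hasDerivWithinAt_mul_self {a v : ℝ → ℝ} {t₀ T : ℝ}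
    (ha : ContinuousOn a (Icc t₀ T))
    (hv : ∀ t ∈ Icc t₀ T, HasDerivWithinAt v (a t * v t) (Icc t₀ T) t) (h₀ : v t₀ = 0) :
    ∀ t ∈ Icc t₀ T, v t = 0 := by
  obtain ⟨K, hK⟩ := isCompact_Icc.exists_bound_of_continuousOn ha
  refine eq_zero_of_abs_deriv_le_mul_abs_self_of_eq_zero_right (K := K)
    (fun t ht => (hv t ht).continuousWithinAt)
    (fun t ht => (hv t (Ico_subset_Icc_self ht)).mono_of_mem_nhdsWithin
      (Icc_mem_nhdsGE_of_mem ht)) h₀ (fun t ht => ?_)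
  rw [norm_mul]
  exact mul_le_mul_of_nonneg_right (hK t (Ico_subset_Icc_self ht)) (norm_nonneg _)

noncomputable def closedFormDefect (p : ℕ) (κ lam C : ℝ) (y : ℝ → ℝ) (t : ℝ) : ℝ :=
  y t ^ p * (lam - C * exp (-(p * κ * t))) + κ

theorem hasDerivWithinAt_closedFormDefect {p : ℕ} {κ lam C : ℝ} {y : ℝ → ℝ} {s : Set ℝ} {t : ℝ}
    (hy : HasDerivWithinAt y (κ * y t + lam * y t ^ (p + 1)) s t) :
    HasDerivWithinAt (closedFormDefect p κ lam C y)
      (p * lam * y t ^ p * closedFormDefect p κ lam C y t) s t := by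
  have hexp : HasDerivAt (fun t => exp (-(p * κ * t))) (exp (-(p * κ * t)) * -(p * κ)) t := by
    simpa using ((hasDerivAt_id t).const_mul (p * κ)).neg.exp
  refine (((hy.pow p).mul ((hexp.const_mul C).const_sub lam).hasDerivWithinAt).add_const
    κ).congr_deriv ?_
  unfold closedFormDefect
  rcases p with _ | n
  · simp
  · push_cast
    simp only [Pi.pow_apply, pow_succ]
    ring

theorem zpow_neg_lt_inv_of_rpow_one_div_lt {a y : ℝ} {p : ℕ} (hp : p ≠ 0) (ha : 0 < a)
    (hy : a ^ ((1 : ℝ) / p) < y) : y ^ (-(p : ℤ)) < a⁻¹ := by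
  have hroot : 0 < a ^ ((1 : ℝ) / p) := rpow_pos_of_pos ha _
  have hpow := pow_lt_pow_left₀ hy hroot.le hp
  rw [one_div, rpow_inv_natCast_pow ha.le hp] at hpow
  rw [zpow_neg, zpow_natCast]
  exact inv_strictAnti₀ ha hpow

noncomputable def escapeTime (p α lam u₀ : ℝ) : ℝ :=
  1 / (p * α) * log ((lam / α) / (lam / α - u₀))

theorem escapeTime_pos {p α lam u₀ : ℝ} (hp : 0 < p) (hα : 0 < α) (hu₀ : 0 < u₀)
    (hu₀lt : u₀ < lam / α) : 0 < escapeTime p α lam u₀ := by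
  have hsub : 0 < lam / α - u₀ := sub_pos.mpr hu₀lt
  exact mul_pos (by positivity) (log_pos ((one_lt_div hsub).mpr (sub_lt_self _ hu₀)))

theorem mul_exp_escapeTime {p α lam u₀ : ℝ} (hp : 0 < p) (hα : 0 < α) (hu₀ : 0 < u₀)
    (hu₀lt : u₀ < lam / α) : (lam - α * u₀) * exp (p * α * escapeTime p α lam u₀) = lam := by
  have hsub : 0 < lam / α - u₀ := sub_pos.mpr hu₀lt
  have hlam : 0 < lam / α := hu₀.trans hu₀lt
  have hC : lam - α * u₀ ≠ 0 := by
    rw [← mul_div_cancel₀ lam hα.ne', ← mul_sub]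
    positivity
  rw [escapeTime, ← mul_assoc, mul_one_div_cancel (by positivity), one_mul,
    exp_log (by positivity)]
  field_simp

theorem stmt_15_general (p : ℕ) (hp : 1 ≤ p)
    (κ : ℝ) (hκ : κ < 0) (α : ℝ) (hα : α = -κ)
    (lam : ℝ) (hlam : 0 < lam)
    (c : ℝ) (hc : c = (α / lam) ^ ((1 : ℝ) / (p : ℝ)))
    (y₀ : ℝ) (hy₀ : c < y₀)
    (T : ℝ)
    (hT : T = (1 / ((p : ℝ) * α)) *
      Real.log ((lam / α) / (lam / α - y₀ ^ (-(p : ℤ))))) :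
    0 < y₀ ^ (-(p : ℤ)) ∧ y₀ ^ (-(p : ℤ)) < lam / α ∧ 0 < T ∧
      ¬ ∃ y : ℝ → ℝ, y 0 = y₀ ∧
        ∀ t ∈ Set.Icc (0 : ℝ) T,
          HasDerivWithinAt y (κ * y t + lam * y t ^ (p + 1)) (Set.Icc (0 : ℝ) T) t := by
  have hα₀ : 0 < α := by linarith
  have hp₀ : (0 : ℝ) < p := by exact_mod_cast hp
  have hc₀ : 0 < c := hc ▸ rpow_pos_of_pos (div_pos hα₀ hlam) _
  have hy₀pos : 0 < y₀ := hc₀.trans hy₀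
  set u₀ := y₀ ^ (-(p : ℤ)) with hu₀
  have hu₀pos : 0 < u₀ := zpow_pos hy₀pos _
  have hu₀lt : u₀ < lam / α :=
    inv_div α lam ▸ zpow_neg_lt_inv_of_rpow_one_div_lt (by omega) (div_pos hα₀ hlam) (hc ▸ hy₀)
  have hT' : T = escapeTime p α lam u₀ := hT
  have hT₀ : 0 < T := hT' ▸ escapeTime_pos hp₀ hα₀ hu₀pos hu₀lt
  refine ⟨hu₀pos, hu₀lt, hT₀, ?_⟩
  rintro ⟨y, hy0, hy⟩
  have hycont : ContinuousOn y (Icc 0 T) := fun t ht => (hy t ht).continuousWithinAt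
  have hW₀ : closedFormDefect p κ lam (lam - α * u₀) y 0 = 0 := by
    rw [closedFormDefect, hy0, hu₀, zpow_neg, zpow_natCast, mul_zero, neg_zero, exp_zero,
      mul_one]
    field_simp
    linarith
  have hW := eq_zero_of_hasDerivWithinAt_mul_self (by fun_prop)
    (fun t ht => hasDerivWithinAt_closedFormDefect (hy t ht)) hW₀ T ⟨hT₀.le, le_rfl⟩
  rw [closedFormDefect, show -(p * κ * T) = p * α * T by rw [hα]; ring, hT',
    mul_exp_escapeTime hp₀ hα₀ hu₀pos hu₀lt] at hW
  linarith

/-- Finite-time escape to +∞ for an odd-p mode with y₀ > c > 0. -/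
theorem stmt_15 (p : ℕ) (hp : 1 ≤ p) (hpo : Odd p)
    (κ : ℝ) (hκ : κ < 0) (α : ℝ) (hα : α = -κ)
    (lam : ℝ) (hlam : 0 < lam)
    (c : ℝ) (hc : c = (α / lam) ^ ((1 : ℝ) / (p : ℝ)))
    (y₀ : ℝ) (hy₀ : c < y₀)
    (T : ℝ)
    (hT : T = (1 / ((p : ℝ) * α)) *
      Real.log ((lam / α) / (lam / α - y₀ ^ (-(p : ℤ))))) :
    0 < y₀ ^ (-(p : ℤ)) ∧ y₀ ^ (-(p : ℤ)) < lam / α ∧ 0 < T ∧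
      ¬ ∃ y : ℝ → ℝ, y 0 = y₀ ∧
        ∀ t ∈ Set.Icc (0 : ℝ) T,
          HasDerivWithinAt y (κ * y t + lam * y t ^ (p + 1)) (Set.Icc (0 : ℝ) T) t :=
  stmt_15_general p hp κ hκ α hα lam hlam c hc y₀ hy₀ T hT
end
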